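/- A linear relation L ⊆ ℝᵐ × ℝⁿ (a subspace of the product) is total if and only if there is a cospan of linear maps f : ℝᵐ → P, p : ℝⁿ → P with p surjective and L = { (x,y) | f(x) = p(y) }. -/
import Mathlib


/-- A linear relation `L ⊆ ℝᵐ × ℝⁿ` is total iff it admits a kernel representation by a
cospan of linear maps whose right leg is surjective (a copartial map). -/
theorem stmt11 (m n : ℕ) (L : Submodule ℝ ((Fin m → ℝ) × (Fin n → ℝ))) :
    (∀ x : Fin m → ℝ, ∃ y : Fin n → ℝ, (x, y) ∈ L) ↔
      ∃ (k : ℕ) (f : (Fin m → ℝ) →ₗ[ℝ] (Fin k → ℝ)) (p : (Fin n → ℝ) →ₗ[ℝ] (Fin k → ℝ)),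
        Function.Surjective p ∧ ∀ x y, ((x, y) ∈ L ↔ f x = p y) := by
  constructor
  · intro htot
    set Q := ((Fin m → ℝ) × (Fin n → ℝ)) ⧸ L
    have : FiniteDimensional ℝ Q := inferInstance
    set k := Module.finrank ℝ Q with hk
    let e : Q ≃ₗ[ℝ] (Fin k → ℝ) := (Module.finBasis ℝ Q).equivFun
    let π : ((Fin m → ℝ) × (Fin n → ℝ)) →ₗ[ℝ] Q := L.mkQ
    let f : (Fin m → ℝ) →ₗ[ℝ] (Fin k → ℝ) :=
      e.toLinearMap ∘ₗ π ∘ₗ LinearMap.inl ℝ _ _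
    let p : (Fin n → ℝ) →ₗ[ℝ] (Fin k → ℝ) :=
      e.toLinearMap ∘ₗ π ∘ₗ (-(LinearMap.inr ℝ (Fin m → ℝ) _))
    have hpeq : ∀ y', p y' = e (π (0, -y')) := by
      intro y'
      simp only [p, LinearMap.comp_apply, LinearMap.neg_apply, LinearMap.inr_apply]
      have hn : -(((0 : Fin m → ℝ), y')) = ((0 : Fin m → ℝ), -y') := by ext <;> simp
      rw [hn]
      rfl
    have hzero : ∀ v : (Fin m → ℝ) × (Fin n → ℝ), π v = 0 ↔ v ∈ L := by
      intro v
      rw [show π v = Submodule.Quotient.mk v from rfl]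
      exact Submodule.Quotient.mk_eq_zero L
    refine ⟨k, f, p, ?_, ?_⟩
    · intro z
      obtain ⟨q, hq⟩ := e.surjective z
      obtain ⟨⟨x, y⟩, hxy⟩ := L.mkQ_surjective q
      obtain ⟨y₀, hy₀⟩ := htot x
      refine ⟨y₀ - y, ?_⟩
      have hq' : π (0, -(y₀ - y)) = q := by
        rw [← hxy, ← sub_eq_zero, ← map_sub]
        rw [show ((0 : Fin m → ℝ), -(y₀ - y)) - (x, y) = -(x, y₀) by ext <;> simp]
        rw [map_neg, neg_eq_zero, hzero]
        exact hy₀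
      rw [hpeq, hq', hq]
    · intro x y
      have key : f x - p y = e (π (x, y)) := by
        rw [hpeq]
        simp only [f, LinearMap.comp_apply, LinearEquiv.coe_coe, LinearMap.inl_apply,
          ← map_sub]
        congr 1
        rw [show ((x : Fin m → ℝ), (0 : Fin n → ℝ)) - (0, -y) = (x, y) by ext <;> simp]
      rw [show (f x = p y) ↔ f x - p y = 0 from sub_eq_zero.symm, key,
        show e (π (x, y)) = 0 ↔ π (x, y) = 0 from by
          constructor
          · intro h; exact e.injective (by simpa using h)
          · intro h; rw [h]; simp,
        hzero]
  · rintro ⟨k, f, p, hp, hrep⟩ x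
    obtain ⟨y, hy⟩ := hp (f x)
    exact ⟨y, (hrep x y).mpr hy.symm⟩
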